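/- The three-tangle τ(ψ) = |Σ ψ_{i₁j₁k₁}ψ_{i₂j₂k₂}ψ_{i₃j₃k₃}ψ_{i₄j₄k₄} ε_{i₁i₂}ε_{i₃i₄}ε_{j₁j₂}ε_{j₃j₄}ε_{k₁k₃}ε_{k₂k₄}| of a three-qubit state ψ ∈ (ℂ²)^{⊗3} is invariant under ψ ↦ (A⊗B⊗C)ψ for all A,B,C ∈ SL(2,ℂ). -/

import Mathlib

open Matrix

/-- The two-index Levi-Civita symbol. -/
def eps2 : Fin 2 → Fin 2 → ℂ :=
  fun i j => if i = 0 ∧ j = 1 then 1 else if i = 1 ∧ j = 0 then -1 else 0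

/-- Action of `A ⊗ B ⊗ C` on a three-qubit state given by its coefficients. -/
noncomputable def act3 (A B C : Matrix (Fin 2) (Fin 2) ℂ)
    (ψ : Fin 2 × Fin 2 × Fin 2 → ℂ) : Fin 2 × Fin 2 × Fin 2 → ℂ :=
  fun x => ∑ i, ∑ j, ∑ k, A x.1 i * B x.2.1 j * C x.2.2 k * ψ (i, j, k)

/-- The three-tangle `τ(ψ)`. -/
noncomputable def tangle3 (ψ : Fin 2 × Fin 2 × Fin 2 → ℂ) : ℝ :=
  ‖(∑ i₁, ∑ i₂, ∑ i₃, ∑ i₄, ∑ j₁, ∑ j₂, ∑ j₃, ∑ j₄, ∑ k₁, ∑ k₂, ∑ k₃, ∑ k₄,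
    ψ (i₁, j₁, k₁) * ψ (i₂, j₂, k₂) * ψ (i₃, j₃, k₃) * ψ (i₄, j₄, k₄) *
      eps2 i₁ i₂ * eps2 i₃ i₄ * eps2 j₁ j₂ * eps2 j₃ j₄ * eps2 k₁ k₃ * eps2 k₂ k₄)‖

/-! Slice `ψ` into the 2×2 matrices `X k = ψ(·, ·, k)` and let
`ω(X, Y) = ∑ ε i i' ε j j' X i j Y i' j' = tr (Xᵀ ε Y εᵀ)`. Since `Mᵀ ε M = det M • ε`,
`ω(A X Bᵀ, A Y Bᵀ) = det A * det B * ω(X, Y)`. The tangle sum is `ω(G, G)` for the Gram matrix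
`G k k' = ω(X k, X k')`, and `A ⊗ B ⊗ C` sends `G` to `det A * det B • C G Cᵀ`, so the sum is
multiplied by `(det A * det B * det C) ^ 2`. -/

namespace Tangle3

lemma eps2_zero_zero : eps2 0 0 = 0 := rfl
lemma eps2_zero_one : eps2 0 1 = 1 := rfl
lemma eps2_one_zero : eps2 1 0 = -1 := rfl
lemma eps2_one_one : eps2 1 1 = 0 := rfl

def epsMat : Matrix (Fin 2) (Fin 2) ℂ := Matrix.of eps2

lemma transpose_mul_epsMat_mul (M : Matrix (Fin 2) (Fin 2) ℂ) :
    Mᵀ * epsMat * M = M.det • epsMat := by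
  ext i j
  fin_cases i <;> fin_cases j <;>
    simp only [epsMat, mul_apply, transpose_apply, of_apply, Fin.sum_univ_two, Fin.isValue,
      Fin.zero_eta, Fin.mk_one, eps2_zero_zero, eps2_zero_one, eps2_one_zero, eps2_one_one,
      det_fin_two, Matrix.smul_apply, smul_eq_mul] <;> ring

-- `ω(X, Y) = ∑ ε i i' * ε j j' * X i j * Y i' j'`, written as a trace.
noncomputable def epsForm :
    Matrix (Fin 2) (Fin 2) ℂ →ₗ[ℂ] Matrix (Fin 2) (Fin 2) ℂ →ₗ[ℂ] ℂ :=
  LinearMap.mk₂ ℂ (fun X Y => trace (Xᵀ * epsMat * Y * epsMatᵀ))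
    (by intros; simp [Matrix.add_mul, trace_add])
    (by intros; simp [trace_smul])
    (by intros; simp [Matrix.mul_add, Matrix.add_mul, trace_add])
    (by intros; simp [trace_smul])

lemma epsForm_apply (X Y : Matrix (Fin 2) (Fin 2) ℂ) :
    epsForm X Y = trace (Xᵀ * epsMat * Y * epsMatᵀ) := rfl

lemma epsForm_mul_mul_transpose (A B X Y : Matrix (Fin 2) (Fin 2) ℂ) :
    epsForm (A * X * Bᵀ) (A * Y * Bᵀ) = A.det * B.det * epsForm X Y := by
  have hA := transpose_mul_epsMat_mul A
  have hB : Bᵀ * epsMatᵀ * B = B.det • epsMatᵀ := by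
    simpa [Matrix.transpose_mul, Matrix.mul_assoc] using
      congrArg transpose (transpose_mul_epsMat_mul B)
  calc trace ((A * X * Bᵀ)ᵀ * epsMat * (A * Y * Bᵀ) * epsMatᵀ)
      = trace (B * (Xᵀ * (Aᵀ * epsMat * A) * Y * Bᵀ * epsMatᵀ)) := by
        simp only [Matrix.transpose_mul, Matrix.transpose_transpose, Matrix.mul_assoc]
    _ = trace (Xᵀ * (Aᵀ * epsMat * A) * Y * (Bᵀ * epsMatᵀ * B)) := by
        rw [trace_mul_comm]; simp only [Matrix.mul_assoc]
    _ = A.det * B.det * epsForm X Y := by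
        rw [hA, hB, epsForm_apply]
        simp only [Matrix.smul_mul, Matrix.mul_smul, trace_smul, smul_eq_mul]; ring

def slice (ψ : Fin 2 × Fin 2 × Fin 2 → ℂ) (k : Fin 2) : Matrix (Fin 2) (Fin 2) ℂ :=
  Matrix.of fun i j => ψ (i, j, k)

noncomputable def sliceGram (ψ : Fin 2 × Fin 2 × Fin 2 → ℂ) : Matrix (Fin 2) (Fin 2) ℂ :=
  Matrix.of fun k k' => epsForm (slice ψ k) (slice ψ k')

lemma slice_act3 (A B C : Matrix (Fin 2) (Fin 2) ℂ) (ψ : Fin 2 × Fin 2 × Fin 2 → ℂ) (k : Fin 2) :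
    slice (act3 A B C ψ) k = A * (∑ c, C k c • slice ψ c) * Bᵀ := by
  ext i j
  simp only [slice, act3, Fin.sum_univ_two, of_apply, smul_of, of_add_of, mul_apply,
    Pi.add_apply, Pi.smul_apply, smul_eq_mul, transpose_apply]
  ring

lemma sliceGram_act3 (A B C : Matrix (Fin 2) (Fin 2) ℂ) (ψ : Fin 2 × Fin 2 × Fin 2 → ℂ) :
    sliceGram (act3 A B C ψ) = (A.det * B.det) • (C * sliceGram ψ * Cᵀ) := by
  ext k k'
  rw [sliceGram, of_apply, slice_act3, slice_act3, epsForm_mul_mul_transpose]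
  simp only [map_sum, map_smul, LinearMap.sum_apply, LinearMap.smul_apply, smul_eq_mul,
    Matrix.smul_apply, mul_apply, transpose_apply, sliceGram, of_apply, Finset.mul_sum, Finset.sum_mul]
  exact Finset.sum_congr rfl fun _ _ => Finset.sum_congr rfl fun _ _ => by ring

lemma tangle3_eq_norm_epsForm_sliceGram (ψ : Fin 2 × Fin 2 × Fin 2 → ℂ) :
    tangle3 ψ = ‖epsForm (sliceGram ψ) (sliceGram ψ)‖ := by
  unfold tangle3
  congr 1
  simp only [epsForm_apply, sliceGram, slice, trace_fin_two, mul_apply, transpose_apply, of_apply,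
    epsMat, Fin.sum_univ_two, eps2_zero_zero, eps2_zero_one, eps2_one_zero, eps2_one_one,
    mul_zero, add_zero, zero_add, mul_one, mul_neg, neg_mul, neg_neg]
  ring

end Tangle3

/-- the three-tangle is invariant under `ψ ↦ (A⊗B⊗C)ψ` with
`A, B, C ∈ SL(2,ℂ)`. -/
theorem tangle3_SL_invariant (ψ : Fin 2 × Fin 2 × Fin 2 → ℂ)
    (A B C : Matrix (Fin 2) (Fin 2) ℂ)
    (hA : A.det = 1) (hB : B.det = 1) (hC : C.det = 1) :
    tangle3 (act3 A B C ψ) = tangle3 ψ := by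
  rw [Tangle3.tangle3_eq_norm_epsForm_sliceGram, Tangle3.tangle3_eq_norm_epsForm_sliceGram,
    Tangle3.sliceGram_act3, hA, hB, mul_one, one_smul, Tangle3.epsForm_mul_mul_transpose, hC,
    one_mul, one_mul]
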